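/- arXiv:2312.07443 — 6 statements merged into one kernel-verified Lean document; each statement's English description precedes it below -/
import Mathlib

section
/- Let d ≥ 1 and T > 0, and let γ : [0,T] → ℝ^d be a C¹ curve with ‖γ′(s)‖ < 1 for every s ∈ [0,T]. Then there exists a continuous map Γ : [0,T] × [0,T] → ℝ^d such that: Γ(0,s) = γ(s) for all s; Γ(T,s) = γ(0) + (s/T)·(γ(T) − γ(0)) for all s; Γ(u,0) = γ(0) and Γ(u,T) = γ(T) for every u ∈ [0,T]; and for every u ∈ [0,T] the curve s ↦ Γ(u,s) is differentiable at every s ∈ [0,T] \ {u} with ‖∂_s Γ(u,s)‖ < 1. -/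
/-!
Deform `γ` linearly into the chord `s ↦ γ 0 + (s / T) • (γ T - γ 0)`. The velocity of every
intermediate curve is a convex combination of `γ' s` and the chord's velocity
`T⁻¹ • (γ T - γ 0)`, so it stays in the open unit ball as soon as the chord's does. The chord is
strictly slower than light because, tested against a norming functional, the mean value theorem
turns `‖γ T - γ 0‖` into `T` times a value of that functional on some `γ' c`, which is `< T`.
-/

open Set

variable {E : Type*} [NormedAddCommGroup E] [NormedSpace ℝ E]

theorem norm_image_sub_lt_of_norm_hasDerivAt_lt {f f' : ℝ → E} {a b K : ℝ} (hab : a < b)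
    (hfc : ContinuousOn f (Icc a b)) (hff' : ∀ x ∈ Ioo a b, HasDerivAt f (f' x) x)
    (hbound : ∀ x ∈ Ioo a b, ‖f' x‖ < K) :
    ‖f b - f a‖ < K * (b - a) := by
  obtain ⟨g, hg_norm, hg_eq⟩ := exists_dual_vector'' ℝ (f b - f a)
  obtain ⟨c, hc, hslope⟩ := exists_hasDerivAt_eq_slope (g ∘ f) (fun x => g (f' x)) hab
    (g.continuous.comp_continuousOn hfc) fun x hx => g.hasFDerivAt.comp_hasDerivAt x (hff' x hx)
  have hgc : g (f' c) < K := calc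
    g (f' c) ≤ ‖g‖ * ‖f' c‖ := (le_abs_self _).trans (g.le_opNorm _)
    _ ≤ ‖f' c‖ := mul_le_of_le_one_left (norm_nonneg _) hg_norm
    _ < K := hbound c hc
  calc ‖f b - f a‖ = g (f b) - g (f a) := by rw [← map_sub, hg_eq, RCLike.ofReal_real_eq_id, id]
    _ = g (f' c) * (b - a) := by rw [hslope, div_mul_cancel₀ _ (sub_pos.2 hab).ne']; rfl
    _ < K * (b - a) := mul_lt_mul_of_pos_right hgc (sub_pos.2 hab)

noncomputable def chordHomotopy (γ : ℝ → E) (T u s : ℝ) : E :=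
  (1 - u / T) • γ s + (u / T) • (γ 0 + (s / T) • (γ T - γ 0))

namespace chordHomotopy

variable {γ : ℝ → E} {T u s : ℝ}

theorem continuousOn {S : Set ℝ} (hγ : ContinuousOn γ S) :
    ContinuousOn (fun p : ℝ × ℝ => chordHomotopy γ T p.1 p.2) (univ ×ˢ S) := by
  have hγ' : ContinuousOn (fun p : ℝ × ℝ => γ p.2) (univ ×ˢ S) :=
    hγ.comp continuous_snd.continuousOn fun _ hp => hp.2
  unfold chordHomotopy
  fun_prop

@[simp]
theorem zero_left : chordHomotopy γ T 0 s = γ s := by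
  simp [chordHomotopy]

theorem self_left (hT : T ≠ 0) : chordHomotopy γ T T s = γ 0 + (s / T) • (γ T - γ 0) := by
  simp [chordHomotopy, div_self hT]

@[simp]
theorem zero_right : chordHomotopy γ T u 0 = γ 0 := by
  simp only [chordHomotopy, zero_div, zero_smul, add_zero]
  module

theorem self_right (hT : T ≠ 0) : chordHomotopy γ T u T = γ T := by
  simp only [chordHomotopy, div_self hT, one_smul]
  module

theorem hasDerivWithinAt {γ' : E} {S : Set ℝ} (hγ : HasDerivWithinAt γ γ' S s) :
    HasDerivWithinAt (chordHomotopy γ T u)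
      ((1 - u / T) • γ' + (u / T) • (T⁻¹ • (γ T - γ 0))) S s := by
  have hchord : HasDerivWithinAt (fun s : ℝ => γ 0 + (s / T) • (γ T - γ 0))
      (T⁻¹ • (γ T - γ 0)) S s := by
    simpa [div_eq_mul_inv] using
      (((hasDerivWithinAt_id s S).div_const T).smul_const (γ T - γ 0)).const_add (γ 0)
  exact (hγ.const_smul (1 - u / T)).add (hchord.const_smul (u / T))

end chordHomotopy

theorem flrw_flat_homotopy_to_segment_general
    (d : ℕ) (T : ℝ) (hT : 0 < T)
    (γ γ' : ℝ → EuclideanSpace ℝ (Fin d))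
    (hderiv : ∀ s ∈ Set.Icc (0:ℝ) T, HasDerivWithinAt γ (γ' s) (Set.Icc (0:ℝ) T) s)
    (hspeed : ∀ s ∈ Set.Icc (0:ℝ) T, ‖γ' s‖ < 1) :
    ∃ Γ : ℝ → ℝ → EuclideanSpace ℝ (Fin d),
      ContinuousOn (fun p : ℝ × ℝ => Γ p.1 p.2) (Set.Icc (0:ℝ) T ×ˢ Set.Icc (0:ℝ) T) ∧
      (∀ s ∈ Set.Icc (0:ℝ) T, Γ 0 s = γ s) ∧
      (∀ s ∈ Set.Icc (0:ℝ) T, Γ T s = γ 0 + (s / T) • (γ T - γ 0)) ∧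
      (∀ u ∈ Set.Icc (0:ℝ) T, Γ u 0 = γ 0 ∧ Γ u T = γ T) ∧
      (∀ u ∈ Set.Icc (0:ℝ) T, ∀ s ∈ Set.Icc (0:ℝ) T, s ≠ u →
        ∃ D : EuclideanSpace ℝ (Fin d),
          HasDerivWithinAt (Γ u) D (Set.Icc (0:ℝ) T) s ∧ ‖D‖ < 1) := by
  have hγc : ContinuousOn γ (Icc 0 T) := fun s hs => (hderiv s hs).continuousWithinAt
  have hchord : ‖T⁻¹ • (γ T - γ 0)‖ < 1 := by
    have := norm_image_sub_lt_of_norm_hasDerivAt_lt hT hγc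
      (fun s hs => (hderiv s (Ioo_subset_Icc_self hs)).hasDerivAt (Icc_mem_nhds hs.1 hs.2))
      (fun s hs => hspeed s (Ioo_subset_Icc_self hs))
    rw [norm_smul, norm_inv, Real.norm_of_nonneg hT.le]
    rw [one_mul, sub_zero] at this
    exact (inv_mul_lt_one₀ hT).2 this
  refine ⟨chordHomotopy γ T,
    (chordHomotopy.continuousOn hγc).mono (prod_mono (subset_univ _) subset_rfl),
    fun s _ => chordHomotopy.zero_left, fun s _ => chordHomotopy.self_left hT.ne',
    fun u _ => ⟨chordHomotopy.zero_right, chordHomotopy.self_right hT.ne'⟩,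
    fun u hu s hs _ => ⟨_, chordHomotopy.hasDerivWithinAt (hderiv s hs), ?_⟩⟩
  have hu₀ : 0 ≤ u / T := div_nonneg hu.1 hT.le
  have hu₁ : u / T ≤ 1 := (div_le_one hT).2 hu.2
  simpa using convex_ball (0 : EuclideanSpace ℝ (Fin d)) 1 (mem_ball_zero_iff.2 (hspeed s hs))
    (mem_ball_zero_iff.2 hchord) (sub_nonneg.2 hu₁) hu₀ (sub_add_cancel 1 _)

/-- Let `d ≥ 1`, `T > 0`, and let `γ : [0,T] → ℝ^d` be a `C¹` curve (with derivative `γ'`,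
continuous on `[0,T]`) satisfying `‖γ' s‖ < 1` for all `s ∈ [0,T]`. Then there is a
continuous map `Γ : [0,T] × [0,T] → ℝ^d` with `Γ 0 s = γ s`, `Γ T s` the straight-line
parametrization from `γ 0` to `γ T`, fixed endpoints `Γ u 0 = γ 0`, `Γ u T = γ T`, and
such that for every `u`, the curve `s ↦ Γ u s` is differentiable at every
`s ∈ [0,T] \ {u}` with speed `< 1`. -/
theorem flrw_flat_homotopy_to_segment
    (d : ℕ) (hd : 1 ≤ d) (T : ℝ) (hT : 0 < T)
    (γ γ' : ℝ → EuclideanSpace ℝ (Fin d))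
    (hderiv : ∀ s ∈ Set.Icc (0:ℝ) T, HasDerivWithinAt γ (γ' s) (Set.Icc (0:ℝ) T) s)
    (hcont : ContinuousOn γ' (Set.Icc (0:ℝ) T))
    (hspeed : ∀ s ∈ Set.Icc (0:ℝ) T, ‖γ' s‖ < 1) :
    ∃ Γ : ℝ → ℝ → EuclideanSpace ℝ (Fin d),
      ContinuousOn (fun p : ℝ × ℝ => Γ p.1 p.2) (Set.Icc (0:ℝ) T ×ˢ Set.Icc (0:ℝ) T) ∧
      (∀ s ∈ Set.Icc (0:ℝ) T, Γ 0 s = γ s) ∧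
      (∀ s ∈ Set.Icc (0:ℝ) T, Γ T s = γ 0 + (s / T) • (γ T - γ 0)) ∧
      (∀ u ∈ Set.Icc (0:ℝ) T, Γ u 0 = γ 0 ∧ Γ u T = γ T) ∧
      (∀ u ∈ Set.Icc (0:ℝ) T, ∀ s ∈ Set.Icc (0:ℝ) T, s ≠ u →
        ∃ D : EuclideanSpace ℝ (Fin d),
          HasDerivWithinAt (Γ u) D (Set.Icc (0:ℝ) T) s ∧ ‖D‖ < 1) :=
  flrw_flat_homotopy_to_segment_general d T hT γ γ' hderiv hspeed
end

section
/- Let d ≥ 2, and let r : (−∞, 0] → (0, ∞) and ω : (−∞, 0] → S^{d−1} be differentiable functions, where S^{d−1} ⊆ ℝ^d is the unit sphere, satisfying r′(τ)² + sinh(r(τ))² · ‖ω′(τ)‖² < 1 for every τ ≤ 0, where ‖·‖ is the Euclidean norm of ℝ^d. Define u(τ) := r(τ) + τ. Then u is strictly increasing on (−∞, 0], and exactly one of the following holds: (i) u(τ) → −∞ as τ → −∞; or (ii) there exist u₀ ∈ ℝ and ω₀ ∈ S^{d−1} such that u(τ) → u₀, r(τ) → +∞, and ω(τ) → ω₀ as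 τ → −∞. -/
/-!
The null coordinate `u = r + τ` has derivative `r' + 1 > 0`, since the timelike condition
forces `|r'| < 1`; being monotone, it either tends to `-∞` or converges to some `u₀`. In the
second case `r = u - τ ≥ u₀ - τ → +∞`, and the timelike condition gives
`‖ω'‖ < 1 / sinh r ≤ 4 e^{-u₀} e^{τ}`, which is integrable at `-∞`, so `ω` is Cauchy at `-∞`
and converges, necessarily to a point of the sphere.
-/

open Filter Real Set Topology

theorem MonotoneOn.tendsto_atBot_atBot_or_exists_tendsto {α β : Type*} [LinearOrder α]
    [ConditionallyCompleteLinearOrder β] [TopologicalSpace β] [OrderTopology β]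
    {f : α → β} {a : α} (hf : MonotoneOn f (Iic a)) :
    Tendsto f atBot atBot ∨ ∃ L, (∀ x ≤ a, L ≤ f x) ∧ Tendsto f atBot (𝓝 L) := by
  set g : α → β := fun x => f (min x a)
  have hg : Monotone g := fun x y hxy =>
    hf (min_le_right x a) (min_le_right y a) (min_le_min_right a hxy)
  have hgf : g =ᶠ[atBot] f := by
    filter_upwards [eventually_le_atBot a] with x hx
    simp only [g, min_eq_left hx]
  by_cases hbdd : BddBelow (range g)
  · refine Or.inr ⟨⨅ x, g x, fun x hx => ?_, (tendsto_atBot_ciInf hg hbdd).congr' hgf⟩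
    simpa only [g, min_eq_left hx] using ciInf_le hbdd x
  · exact Or.inl ((tendsto_atBot_atBot_of_monotone' hg hbdd).congr' hgf)

theorem strictMonoOn_Iic_of_hasDerivWithinAt_pos {f f' : ℝ → ℝ} {a : ℝ}
    (hf : ∀ x ≤ a, HasDerivWithinAt f (f' x) (Iic a) x) (hf' : ∀ x < a, 0 < f' x) :
    StrictMonoOn f (Iic a) := by
  refine strictMonoOn_of_hasDerivWithinAt_pos (f' := f') (convex_Iic a)
    (fun x hx => (hf x hx).continuousWithinAt) (fun x hx => ?_) (fun x hx => ?_)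
  · rw [interior_Iic] at hx ⊢
    exact (hf x hx.le).mono Iio_subset_Iic_self
  · rw [interior_Iic] at hx
    exact hf' x hx

theorem abs_lt_one_of_sq_add_sq_lt_one {a b : ℝ} (h : a ^ 2 + b ^ 2 < 1) : |a| < 1 :=
  (sq_lt_one_iff_abs_lt_one a).1 (by nlinarith [sq_nonneg b])

theorem Real.exp_div_four_le_sinh {x : ℝ} (hx : 1 ≤ x) : exp x / 4 ≤ sinh x := by
  have h_exp_neg : exp (-x) ≤ 1 := exp_le_one_iff.2 (by linarith)
  have h_two_le_exp : 2 ≤ exp x := by linarith [add_one_le_exp x]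
  rw [sinh_eq]
  linarith

theorem le_four_mul_exp_neg_of_sinh_mul_lt_one {x ρ w : ℝ} (hρ : 1 ≤ ρ) (hρx : ρ ≤ x)
    (hw : 0 ≤ w) (h : sinh x * w < 1) : w ≤ 4 * exp (-ρ) := by
  have hsinh : exp ρ / 4 ≤ sinh x := (exp_div_four_le_sinh hρ).trans (sinh_le_sinh.2 hρx)
  have hexp : exp ρ * w ≤ 4 := by nlinarith [mul_le_mul_of_nonneg_right hsinh hw]
  rw [exp_neg, ← div_eq_mul_inv, le_div_iff₀ (exp_pos ρ)]
  linarith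

section ExponentialDecay

variable {E : Type*} [NormedAddCommGroup E] [NormedSpace ℝ E] {f f' : ℝ → E} {a C : ℝ}

theorem norm_sub_le_of_norm_deriv_le_exp (hf : ∀ x ≤ a, HasDerivWithinAt f (f' x) (Iic a) x)
    (bound : ∀ x ≤ a, ‖f' x‖ ≤ C * exp x) {s t : ℝ} (hst : s ≤ t) (hta : t ≤ a) :
    ‖f t - f s‖ ≤ C * (exp t - exp s) := by
  have hsub : Icc s t ⊆ Iic a := fun x hx => hx.2.trans hta
  have hcont : ContinuousOn (fun x => f x - f s) (Icc s t) := fun x hx =>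
    (((hf x (hsub hx)).continuousWithinAt).mono hsub).sub continuousWithinAt_const
  have hderiv : ∀ x ∈ Ico s t, HasDerivWithinAt (fun y => f y - f s) (f' x) (Ici x) x :=
    fun x hx => (((hf x (hsub (Ico_subset_Icc_self hx))).hasDerivAt
      (Iic_mem_nhds (hx.2.trans_le hta))).sub_const (f s)).hasDerivWithinAt
  have hB : ∀ x, HasDerivAt (fun y => C * exp y - C * exp s) (C * exp x) x :=
    fun x => ((hasDerivAt_exp x).const_mul C).sub_const _
  have := image_norm_le_of_norm_deriv_right_le_deriv_boundary hcont hderiv (by simp) hB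
    (fun x hx => bound x (hx.2.le.trans hta)) (right_mem_Icc.2 hst)
  simpa only [mul_sub] using this

theorem exists_tendsto_atBot_of_norm_deriv_le_exp [CompleteSpace E]
    (hf : ∀ x ≤ a, HasDerivWithinAt f (f' x) (Iic a) x)
    (bound : ∀ x ≤ a, ‖f' x‖ ≤ C * exp x) : ∃ y, Tendsto f atBot (𝓝 y) := by
  have hC : 0 ≤ C :=
    nonneg_of_mul_nonneg_left ((norm_nonneg _).trans (bound a le_rfl)) (exp_pos a)
  have hdist : ∀ s t, s ≤ t → t ≤ a → dist (f s) (f t) ≤ C * exp t := fun s t hst hta => by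
    rw [dist_comm, dist_eq_norm]
    nlinarith [norm_sub_le_of_norm_deriv_le_exp hf bound hst hta, exp_pos s]
  refine cauchy_map_iff_exists_tendsto.1 (Metric.cauchy_iff.2 ⟨map_neBot, fun ε hε => ?_⟩)
  have hsmall : ∀ᶠ t in atBot, t ≤ a ∧ C * exp t < ε / 2 :=
    have hCexp : Tendsto (fun t => C * exp t) atBot (𝓝 0) := by
      simpa only [mul_zero] using tendsto_exp_atBot.const_mul C
    (eventually_le_atBot a).and (hCexp.eventually (gt_mem_nhds (half_pos hε)))
  obtain ⟨T, hTa, hT⟩ := hsmall.exists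
  refine ⟨f '' Iic T, image_mem_map (Iic_mem_atBot T), ?_⟩
  rintro _ ⟨x, hx, rfl⟩ _ ⟨y, hy, rfl⟩
  calc dist (f x) (f y) ≤ dist (f x) (f T) + dist (f y) (f T) := dist_triangle_right _ _ _
    _ ≤ C * exp T + C * exp T := add_le_add (hdist x T hx hTa) (hdist y T hy hTa)
    _ < ε := by linarith

end ExponentialDecay

theorem flrw_hyperbolic_tif_dichotomy_general
    (d : ℕ)
    (r r' : ℝ → ℝ) (ω ω' : ℝ → EuclideanSpace ℝ (Fin d))
    (hω_sph : ∀ τ ≤ (0:ℝ), ‖ω τ‖ = 1)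
    (hr_deriv : ∀ τ ≤ (0:ℝ), HasDerivWithinAt r (r' τ) (Set.Iic (0:ℝ)) τ)
    (hω_deriv : ∀ τ ≤ (0:ℝ), HasDerivWithinAt ω (ω' τ) (Set.Iic (0:ℝ)) τ)
    (htimelike : ∀ τ ≤ (0:ℝ), (r' τ)^2 + (Real.sinh (r τ))^2 * ‖ω' τ‖^2 < 1) :
    StrictMonoOn (fun τ => r τ + τ) (Set.Iic (0:ℝ)) ∧
    Xor'
      (Tendsto (fun τ => r τ + τ) atBot atBot)
      (∃ u₀ : ℝ, ∃ ω₀ : EuclideanSpace ℝ (Fin d), ‖ω₀‖ = 1 ∧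
        Tendsto (fun τ => r τ + τ) atBot (nhds u₀) ∧
        Tendsto r atBot atTop ∧
        Tendsto ω atBot (nhds ω₀)) := by
  have hr'_abs : ∀ τ ≤ (0:ℝ), |r' τ| < 1 := fun τ hτ =>
    abs_lt_one_of_sq_add_sq_lt_one (by rw [mul_pow]; exact htimelike τ hτ)
  have hsinh : ∀ τ ≤ (0:ℝ), sinh (r τ) * ‖ω' τ‖ < 1 := fun τ hτ => lt_of_abs_lt
    (abs_lt_one_of_sq_add_sq_lt_one (b := r' τ)
      (by rw [mul_pow]; linarith [htimelike τ hτ]))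
  have hu_mono : StrictMonoOn (fun τ => r τ + τ) (Iic 0) :=
    strictMonoOn_Iic_of_hasDerivWithinAt_pos
      (fun τ hτ => (hr_deriv τ hτ).add (hasDerivWithinAt_id τ _))
      (fun τ hτ => by linarith [neg_abs_le (r' τ), hr'_abs τ hτ.le])
  refine ⟨hu_mono, (xor_iff_or_and_not_and _ _).2 ⟨?_, fun ⟨hbot, _, _, _, hu₀, _⟩ =>
    not_tendsto_atBot_of_tendsto_nhds hu₀ hbot⟩⟩
  obtain hbot | ⟨u₀, hu₀_le, hu₀⟩ := hu_mono.monotoneOn.tendsto_atBot_atBot_or_exists_tendsto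
  · exact Or.inl hbot
  have hr : Tendsto r atBot atTop := by
    simpa only [add_neg_cancel_right] using hu₀.add_atTop tendsto_neg_atBot_atTop
  set T := min 0 (u₀ - 1)
  have hω'_le : ∀ τ ≤ T, ‖ω' τ‖ ≤ 4 * exp (-u₀) * exp τ := fun τ hτ => by
    have hτ0 : τ ≤ 0 := hτ.trans (min_le_left _ _)
    have hbound := le_four_mul_exp_neg_of_sinh_mul_lt_one (ρ := u₀ - τ)
      (by linarith [min_le_right 0 (u₀ - 1)]) (by linarith [hu₀_le τ hτ0]) (norm_nonneg _)
      (hsinh τ hτ0)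
    rwa [neg_sub, sub_eq_add_neg, add_comm, exp_add, ← mul_assoc] at hbound
  obtain ⟨ω₀, hω₀⟩ := exists_tendsto_atBot_of_norm_deriv_le_exp (fun τ hτ =>
    (hω_deriv τ (hτ.trans (min_le_left _ _))).mono (Iic_subset_Iic.2 (min_le_left _ _))) hω'_le
  have hω₀_norm : ‖ω₀‖ = 1 := tendsto_nhds_unique hω₀.norm (tendsto_const_nhds.congr'
    (by filter_upwards [eventually_le_atBot 0] with τ hτ using (hω_sph τ hτ).symm))
  exact Or.inr ⟨u₀, ω₀, hω₀_norm, hu₀, hr, hω₀⟩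

/-- Let `d ≥ 2` and let `r : (−∞,0] → (0,∞)` and `ω : (−∞,0] → S^{d−1} ⊆ ℝ^d` be
differentiable with `r'(τ)² + sinh(r τ)² ‖ω'(τ)‖² < 1` for all `τ ≤ 0`. Set
`u(τ) = r(τ) + τ`. Then `u` is strictly increasing on `(−∞,0]` and exactly one of:
(i) `u(τ) → −∞` as `τ → −∞`; (ii) there are `u₀ ∈ ℝ`, `ω₀ ∈ S^{d−1}` with
`u(τ) → u₀`, `r(τ) → +∞` and `ω(τ) → ω₀` as `τ → −∞`. -/
theorem flrw_hyperbolic_tif_dichotomy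
    (d : ℕ) (hd : 2 ≤ d)
    (r r' : ℝ → ℝ) (ω ω' : ℝ → EuclideanSpace ℝ (Fin d))
    (hr_pos : ∀ τ ≤ (0:ℝ), 0 < r τ)
    (hω_sph : ∀ τ ≤ (0:ℝ), ‖ω τ‖ = 1)
    (hr_deriv : ∀ τ ≤ (0:ℝ), HasDerivWithinAt r (r' τ) (Set.Iic (0:ℝ)) τ)
    (hω_deriv : ∀ τ ≤ (0:ℝ), HasDerivWithinAt ω (ω' τ) (Set.Iic (0:ℝ)) τ)
    (htimelike : ∀ τ ≤ (0:ℝ), (r' τ)^2 + (Real.sinh (r τ))^2 * ‖ω' τ‖^2 < 1) :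
    StrictMonoOn (fun τ => r τ + τ) (Set.Iic (0:ℝ)) ∧
    Xor'
      (Tendsto (fun τ => r τ + τ) atBot atBot)
      (∃ u₀ : ℝ, ∃ ω₀ : EuclideanSpace ℝ (Fin d), ‖ω₀‖ = 1 ∧
        Tendsto (fun τ => r τ + τ) atBot (nhds u₀) ∧
        Tendsto r atBot atTop ∧
        Tendsto ω atBot (nhds ω₀)) :=
  flrw_hyperbolic_tif_dichotomy_general d r r' ω ω' hω_sph hr_deriv hω_deriv htimelike
end

section
/- Let d ≥ 1 and let a : (0, ∞) → (0, ∞) be continuous with ∫₀¹ dt/a(t) = ∞. Let γ : (0,1) → S^d be a differentiable curve into the unit sphere S^d ⊆ ℝ^{d+1} with ‖γ′(s)‖ < 1/a(s) for every s ∈ (0,1), where ‖·‖ is the Euclidean norm of ℝ^{d+1}. Then for every s₀ ∈ (0,1), every t̂ > 0 and every ω̂ ∈ S^d there exist s ∈ (0, min(s₀, t̂)) and a continuous, piecewise C¹ curve σ : [s, t̂] → S^d with σ(s) = γ(s), σ(t̂) = ω̂, and ‖σ′(τ)‖ < 1/a(τ) at every τ at which σ is differentiable. -/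
/-!
For `s` close to `0` the conformal time `∫ s..t̂, dt / a` exceeds `π`, because `1 / a` is not
integrable at `0`. Any two points `p, ω` of the unit sphere are joined by a great-circle arc of
length `angle p ω ≤ π`; running along it with angular speed `c / a(τ)`, where
`c = angle p ω / ∫ s..t̂, dt / a < 1`, gives a curve from `γ s` to `ω` with speed below `1 / a`.
-/

open Filter MeasureTheory

/-- A curve `σ : [s,b] → E` is *piecewise C¹ with speed less than `1/a`* if there is a
partition `s = t 0 < t 1 < ⋯ < t n = b` such that on each closed subinterval `σ` has a
continuous derivative whose norm is pointwise `< 1 / a`. -/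
def PiecewiseC1SpeedLt {E : Type*} [NormedAddCommGroup E] [NormedSpace ℝ E]
    (a : ℝ → ℝ) (σ : ℝ → E) (s b : ℝ) : Prop :=
  ∃ n : ℕ, ∃ t : ℕ → ℝ, 0 < n ∧ t 0 = s ∧ t n = b ∧ (∀ i, i < n → t i < t (i + 1)) ∧
    ∀ i, i < n → ∃ σ' : ℝ → E,
      ContinuousOn σ' (Set.Icc (t i) (t (i + 1))) ∧
      ∀ x ∈ Set.Icc (t i) (t (i + 1)),
        HasDerivWithinAt σ (σ' x) (Set.Icc (t i) (t (i + 1))) x ∧ ‖σ' x‖ < 1 / a x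

open Set InnerProductGeometry
open scoped RealInnerProductSpace Topology

section Integrals

variable {f : ℝ → ℝ}

lemma integrableOn_Ioc_of_continuousOn_Ioi (hf : ContinuousOn f (Ioi 0)) {u v : ℝ}
    (hu : 0 < u) : IntegrableOn f (Ioc u v) :=
  (hf.mono fun _ hx => hu.trans_le hx.1).integrableOn_Icc.mono_set Ioc_subset_Icc_self

lemma intervalIntegrable_of_continuousOn_Ioi (hf : ContinuousOn f (Ioi 0)) {u v : ℝ}
    (hu : 0 < u) (hv : 0 < v) : IntervalIntegrable f volume u v :=
  ⟨integrableOn_Ioc_of_continuousOn_Ioi hf hu, integrableOn_Ioc_of_continuousOn_Ioi hf hv⟩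

lemma not_integrableOn_Ioc_zero_of_lintegral_eq_top (hf : ContinuousOn f (Ioi 0))
    (h : ∫⁻ t in Ioc 0 1, ENNReal.ofReal (f t) = ⊤) {m : ℝ} (hm : 0 < m) :
    ¬ IntegrableOn f (Ioc 0 m) := fun hint =>
  ((hint.union (integrableOn_Ioc_of_continuousOn_Ioi hf hm)).mono_set
    Ioc_subset_Ioc_union_Ioc).lintegral_lt_top.ne h

lemma exists_lt_intervalIntegral_of_not_integrableOn (hf : ContinuousOn f (Ioi 0))
    (hf_nonneg : ∀ x > 0, 0 ≤ f x) {m : ℝ} (hm : 0 < m) (hint : ¬ IntegrableOn f (Ioc 0 m))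
    (C : ℝ) : ∃ s ∈ Ioo 0 m, C < ∫ x in s..m, f x := by
  by_contra! hbound
  set u : ℕ → ℝ := fun n => m / (n + 2)
  have hu : ∀ n, u n ∈ Ioo 0 m := fun n =>
    ⟨by positivity, div_lt_self hm (by linarith [n.cast_nonneg (α := ℝ)])⟩
  have hu_lim : Tendsto u atTop (𝓝 0) :=
    ((tendsto_const_div_atTop_nhds_zero_nat m).comp (tendsto_add_atTop_nat 2)).congr
      fun n => by simp [u]
  refine hint (integrableOn_Ioc_of_intervalIntegral_norm_bounded_left (I := C)
    (fun n => integrableOn_Ioc_of_continuousOn_Ioi hf (hu n).1) hu_lim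
    (Eventually.of_forall fun n => ?_))
  calc ∫ x in Ioc (u n) m, ‖f x‖ = ∫ x in u n..m, f x := by
        rw [intervalIntegral.integral_of_le (hu n).2.le]
        refine setIntegral_congr_fun measurableSet_Ioc fun x hx => ?_
        exact Real.norm_of_nonneg (hf_nonneg x ((hu n).1.trans hx.1))
    _ ≤ C := hbound _ (hu n)

lemma hasDerivAt_intervalIntegral_of_continuousOn_Ioi (hf : ContinuousOn f (Ioi 0))
    {s t : ℝ} (hs : 0 < s) (ht : 0 < t) :
    HasDerivAt (fun τ => ∫ x in s..τ, f x) (f t) t :=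
  intervalIntegral.integral_hasDerivAt_right (intervalIntegrable_of_continuousOn_Ioi hf hs ht)
    (hf.stronglyMeasurableAtFilter isOpen_Ioi t ht) (hf.continuousAt (isOpen_Ioi.mem_nhds ht))

end Integrals

section GreatCircle

variable {E : Type*} [NormedAddCommGroup E] [InnerProductSpace ℝ E]

noncomputable def greatCircle (p q : E) (θ : ℝ) : E := Real.cos θ • p + Real.sin θ • q

variable {p q : E}

@[simp]
lemma greatCircle_zero : greatCircle p q 0 = p := by
  simp [greatCircle]

lemma continuous_greatCircle : Continuous (greatCircle p q) := by
  unfold greatCircle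
  fun_prop

lemma hasDerivAt_greatCircle (θ : ℝ) :
    HasDerivAt (greatCircle p q) (greatCircle p q (θ + Real.pi / 2)) θ := by
  rw [greatCircle, Real.cos_add_pi_div_two, Real.sin_add_pi_div_two]
  exact ((Real.hasDerivAt_cos θ).smul_const p).add ((Real.hasDerivAt_sin θ).smul_const q)

lemma norm_greatCircle (hp : ‖p‖ = 1) (hq : ‖q‖ = 1) (hpq : ⟪p, q⟫ = 0) (θ : ℝ) :
    ‖greatCircle p q θ‖ = 1 := by
  have hsq : ‖greatCircle p q θ‖ ^ 2 = 1 := by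
    rw [greatCircle, norm_add_sq_real, real_inner_smul_left, real_inner_smul_right, hpq,
      norm_smul, norm_smul, hp, hq, Real.norm_eq_abs, Real.norm_eq_abs]
    simp only [mul_one, mul_zero, sq_abs, add_zero, Real.cos_sq_add_sin_sq]
  exact (pow_eq_one_iff_of_nonneg (norm_nonneg _) two_ne_zero).1 hsq

lemma exists_norm_eq_one_inner_eq_zero [FiniteDimensional ℝ E] (hE : 2 ≤ Module.finrank ℝ E)
    (p : E) : ∃ q : E, ‖q‖ = 1 ∧ ⟪p, q⟫ = 0 := by
  have hspan : Module.finrank ℝ (ℝ ∙ p) ≤ 1 := by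
    simpa using finrank_span_le_card (R := ℝ) {p}
  have : Nontrivial (ℝ ∙ p)ᗮ := by
    rw [← Module.finrank_pos_iff (R := ℝ)]
    have := (ℝ ∙ p).finrank_add_finrank_orthogonal
    omega
  obtain ⟨q, hq⟩ := exists_norm_eq (ℝ ∙ p)ᗮ zero_le_one
  exact ⟨q, hq, Submodule.mem_orthogonal_singleton_iff_inner_right.1 q.2⟩

lemma exists_greatCircle_angle_eq [FiniteDimensional ℝ E] (hE : 2 ≤ Module.finrank ℝ E)
    {ω : E} (hp : ‖p‖ = 1) (hω : ‖ω‖ = 1) :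
    ∃ q : E, ‖q‖ = 1 ∧ ⟪p, q⟫ = 0 ∧ greatCircle p q (angle p ω) = ω := by
  set w := ω - ⟪p, ω⟫ • p
  have hpw : ⟪p, w⟫ = 0 := by
    simp [w, inner_sub_right, real_inner_smul_right, hp]
  have hcos : Real.cos (angle p ω) = ⟪p, ω⟫ := by simp [cos_angle, hp, hω]
  have hsin : Real.sin (angle p ω) = ‖w‖ := by
    have hw_sq : ‖w‖ ^ 2 = 1 - ⟪p, ω⟫ ^ 2 := by
      rw [norm_sub_sq_real, norm_smul, real_inner_smul_right, real_inner_comm, hp, hω,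
        Real.norm_eq_abs, mul_one, sq_abs]
      ring
    rw [angle, hp, hω, one_mul, div_one, Real.sin_arccos, ← hw_sq, Real.sqrt_sq (norm_nonneg _)]
  suffices ∃ q : E, ‖q‖ = 1 ∧ ⟪p, q⟫ = 0 ∧ ‖w‖ • q = w by
    obtain ⟨q, hq, hpq, hwq⟩ := this
    refine ⟨q, hq, hpq, ?_⟩
    rw [greatCircle, hcos, hsin, hwq, add_sub_cancel]
  by_cases hw : w = 0
  -- `ω = ±p`, and any unit vector orthogonal to `p` will do
  · obtain ⟨q, hq, hpq⟩ := exists_norm_eq_one_inner_eq_zero hE p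
    exact ⟨q, hq, hpq, by simp [hw]⟩
  · refine ⟨‖w‖⁻¹ • w, ?_, ?_, ?_⟩
    · rw [norm_smul, norm_inv, norm_norm, inv_mul_cancel₀ (norm_ne_zero_iff.2 hw)]
    · rw [real_inner_smul_right, hpw, mul_zero]
    · rw [smul_smul, mul_inv_cancel₀ (norm_ne_zero_iff.2 hw), one_smul]

end GreatCircle

lemma piecewiseC1SpeedLt_of_hasDerivWithinAt {E : Type*} [NormedAddCommGroup E]
    [NormedSpace ℝ E] {a : ℝ → ℝ} {σ σ' : ℝ → E} {s b : ℝ} (hsb : s < b)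
    (hσ' : ContinuousOn σ' (Icc s b))
    (hσ : ∀ x ∈ Icc s b, HasDerivWithinAt σ (σ' x) (Icc s b) x ∧ ‖σ' x‖ < 1 / a x) :
    PiecewiseC1SpeedLt a σ s b := by
  refine ⟨1, fun i => if i = 0 then s else b, one_pos, rfl, rfl, ?_, ?_⟩ <;>
    intro i hi <;> obtain rfl : i = 0 := Nat.lt_one_iff.1 hi
  · exact hsb
  · exact ⟨σ', hσ', hσ⟩

lemma exists_unit_curve_of_angle_lt_integral {E : Type*} [NormedAddCommGroup E]
    [InnerProductSpace ℝ E] [FiniteDimensional ℝ E] (hE : 2 ≤ Module.finrank ℝ E)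
    {a : ℝ → ℝ} (ha_pos : ∀ t > 0, 0 < a t) (ha_cont : ContinuousOn a (Ioi 0))
    {s b : ℝ} (hs : 0 < s) (hsb : s < b) {p ω : E} (hp : ‖p‖ = 1) (hω : ‖ω‖ = 1)
    (hangle : angle p ω < ∫ x in s..b, 1 / a x) :
    ∃ σ : ℝ → E, ContinuousOn σ (Icc s b) ∧ σ s = p ∧ σ b = ω ∧
      (∀ τ ∈ Icc s b, ‖σ τ‖ = 1) ∧ PiecewiseC1SpeedLt a σ s b := by
  obtain ⟨q, hq, hpq, hω_eq⟩ := exists_greatCircle_angle_eq hE hp hω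
  set I := ∫ x in s..b, 1 / a x
  have hI : 0 < I := (angle_nonneg p ω).trans_lt hangle
  set c := angle p ω / I
  have hc : c < 1 := (div_lt_one hI).2 hangle
  have hc_nonneg : 0 ≤ c := div_nonneg (angle_nonneg p ω) hI.le
  have hinv_cont : ContinuousOn (fun x => 1 / a x) (Ioi 0) :=
    continuousOn_const.div ha_cont fun x hx => (ha_pos x hx).ne'
  set θ : ℝ → ℝ := fun τ => c * ∫ x in s..τ, 1 / a x
  have hθ : ∀ τ ∈ Icc s b, HasDerivAt θ (c * (1 / a τ)) τ := fun τ hτ =>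
    (hasDerivAt_intervalIntegral_of_continuousOn_Ioi hinv_cont hs (hs.trans_le hτ.1)).const_mul c
  have hσ : ∀ τ ∈ Icc s b, HasDerivAt (greatCircle p q ∘ θ)
      ((c * (1 / a τ)) • greatCircle p q (θ τ + Real.pi / 2)) τ := fun τ hτ =>
    (hasDerivAt_greatCircle _).scomp τ (hθ τ hτ)
  have hθ_cont : ContinuousOn θ (Icc s b) := fun τ hτ =>
    (hθ τ hτ).continuousAt.continuousWithinAt
  have hθs : θ s = 0 := by simp [θ]
  have hθb : θ b = angle p ω := div_mul_cancel₀ _ hI.ne'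
  have hσ'_cont : ContinuousOn
      (fun τ => (c * (1 / a τ)) • greatCircle p q (θ τ + Real.pi / 2)) (Icc s b) :=
    (continuousOn_const.mul (hinv_cont.mono fun τ hτ => hs.trans_le hτ.1)).smul
      (continuous_greatCircle.comp_continuousOn (hθ_cont.add continuousOn_const))
  refine ⟨greatCircle p q ∘ θ, fun τ hτ => (hσ τ hτ).continuousAt.continuousWithinAt,
    by rw [Function.comp_apply, hθs, greatCircle_zero],
    by rw [Function.comp_apply, hθb, hω_eq], fun τ _ => norm_greatCircle hp hq hpq _,
    piecewiseC1SpeedLt_of_hasDerivWithinAt hsb hσ'_cont fun τ hτ =>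
      ⟨(hσ τ hτ).hasDerivWithinAt, ?_⟩⟩
  have ha : 0 < 1 / a τ := one_div_pos.2 (ha_pos τ (hs.trans_le hτ.1))
  calc ‖(c * (1 / a τ)) • greatCircle p q (θ τ + Real.pi / 2)‖ = c * (1 / a τ) := by
        rw [norm_smul, norm_greatCircle hp hq hpq, mul_one, Real.norm_of_nonneg (by positivity)]
    _ < 1 / a τ := mul_lt_of_lt_one_left ha hc

theorem flrw_spherical_timelike_future_is_everything_general
    (d : ℕ) (hd : 1 ≤ d)
    (a : ℝ → ℝ) (ha_pos : ∀ t > (0:ℝ), 0 < a t) (ha_cont : ContinuousOn a (Set.Ioi 0))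
    (ha_noPH : ∫⁻ t in Set.Ioc (0:ℝ) 1, ENNReal.ofReal (1 / a t) = ⊤)
    (γ : ℝ → EuclideanSpace ℝ (Fin (d + 1)))
    (hγ_sph : ∀ s ∈ Set.Ioo (0:ℝ) 1, ‖γ s‖ = 1) :
    ∀ s₀ ∈ Set.Ioo (0:ℝ) 1, ∀ that > (0:ℝ),
      ∀ ωhat : EuclideanSpace ℝ (Fin (d + 1)), ‖ωhat‖ = 1 →
        ∃ s ∈ Set.Ioo (0:ℝ) (min s₀ that), ∃ σ : ℝ → EuclideanSpace ℝ (Fin (d + 1)),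
          ContinuousOn σ (Set.Icc s that) ∧
          σ s = γ s ∧ σ that = ωhat ∧
          (∀ τ ∈ Set.Icc s that, ‖σ τ‖ = 1) ∧
          PiecewiseC1SpeedLt a σ s that := by
  intro s₀ hs₀ that hthat ωhat hωhat
  have hinv_cont : ContinuousOn (fun t => 1 / a t) (Ioi 0) :=
    continuousOn_const.div ha_cont fun t ht => (ha_pos t ht).ne'
  have hinv_pos : ∀ t > 0, 0 ≤ 1 / a t := fun t ht => (one_div_pos.2 (ha_pos t ht)).le
  have hm : 0 < min s₀ that := lt_min hs₀.1 hthat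
  obtain ⟨s, hs, hπ⟩ := exists_lt_intervalIntegral_of_not_integrableOn hinv_cont hinv_pos hm
    (not_integrableOn_Ioc_zero_of_lintegral_eq_top hinv_cont ha_noPH hm) Real.pi
  have hangle : angle (γ s) ωhat < ∫ x in s..that, 1 / a x :=
    (angle_le_pi _ _).trans_lt <| hπ.trans_le <|
      intervalIntegral.integral_mono_interval le_rfl hs.2.le (min_le_right _ _)
        (ae_restrict_of_forall_mem measurableSet_Ioc fun t ht => hinv_pos t (hs.1.trans ht.1))
        (intervalIntegrable_of_continuousOn_Ioi hinv_cont hs.1 hthat)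
  have hγs : ‖γ s‖ = 1 := hγ_sph s ⟨hs.1, (hs.2.trans_le (min_le_left _ _)).trans hs₀.2⟩
  have hdim : 2 ≤ Module.finrank ℝ (EuclideanSpace ℝ (Fin (d + 1))) := by
    rw [finrank_euclideanSpace_fin]
    omega
  exact ⟨s, hs, exists_unit_curve_of_angle_lt_integral hdim ha_pos ha_cont hs.1
    (hs.2.trans_le (min_le_right _ _)) hγs hωhat hangle⟩

/-- Let `d ≥ 1` and `a : (0,∞) → (0,∞)` continuous with `∫₀¹ dt/a(t) = ∞` (no particle
horizons). Let `γ : (0,1) → S^d ⊆ ℝ^{d+1}` be differentiable with `‖γ'(s)‖ < 1/a(s)`.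
Then for every `s₀ ∈ (0,1)`, every `that > 0` and every `ωhat ∈ S^d` there exist
`s ∈ (0, min s₀ that)` and a continuous, piecewise `C¹` curve `σ : [s, that] → S^d` with
`σ s = γ s`, `σ that = ωhat` and speed `< 1/a` wherever differentiable. -/
theorem flrw_spherical_timelike_future_is_everything
    (d : ℕ) (hd : 1 ≤ d)
    (a : ℝ → ℝ) (ha_pos : ∀ t > (0:ℝ), 0 < a t) (ha_cont : ContinuousOn a (Set.Ioi 0))
    (ha_noPH : ∫⁻ t in Set.Ioc (0:ℝ) 1, ENNReal.ofReal (1 / a t) = ⊤)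
    (γ γ' : ℝ → EuclideanSpace ℝ (Fin (d + 1)))
    (hγ_sph : ∀ s ∈ Set.Ioo (0:ℝ) 1, ‖γ s‖ = 1)
    (hγ_deriv : ∀ s ∈ Set.Ioo (0:ℝ) 1, HasDerivAt γ (γ' s) s)
    (hγ_speed : ∀ s ∈ Set.Ioo (0:ℝ) 1, ‖γ' s‖ < 1 / a s) :
    ∀ s₀ ∈ Set.Ioo (0:ℝ) 1, ∀ that > (0:ℝ),
      ∀ ωhat : EuclideanSpace ℝ (Fin (d + 1)), ‖ωhat‖ = 1 →
        ∃ s ∈ Set.Ioo (0:ℝ) (min s₀ that), ∃ σ : ℝ → EuclideanSpace ℝ (Fin (d + 1)),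
          ContinuousOn σ (Set.Icc s that) ∧
          σ s = γ s ∧ σ that = ωhat ∧
          (∀ τ ∈ Set.Icc s that, ‖σ τ‖ = 1) ∧
          PiecewiseC1SpeedLt a σ s that :=
  flrw_spherical_timelike_future_is_everything_general d hd a ha_pos ha_cont ha_noPH γ hγ_sph
end

section
/- Let f : ℝ^m → ℝ^n, let A ⊆ ℝ^m and a ∈ A. Assume that f is differentiable at a, that the differential df|_a is injective, that the restriction f|_A is injective, and that the inverse (f|_A)^{−1} : f(A) → A is continuous at f(a). Then df|_a(Tan(A, a)) = Tan(f(A), f(a)). -/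
/-!
Write `v ∈ Tan(A, a)` as `t • w` with `t ≥ 0` and `w` a limit of normalized secants
`(x k - a)/‖x k - a‖`. Differentiability gives `(f (x k) - f a)/‖x k - a‖ → df w ≠ 0`, so the
normalized secants of `f '' A` converge to `df w/‖df w‖`. Conversely, a sequence in `f '' A`
approaching `f a` lifts, by continuity of the inverse, to a sequence in `A` approaching `a`;
compactness of the unit sphere gives a subsequence with a limiting direction `w`, and then the
given direction of `f '' A` must be `df w/‖df w‖`.
-/

open Filter

/-- The tangent cone of `A ⊆ E` at `a`: all `v` such that there is a sequence
`x k ∈ A \ {a}` with `x k → a` whose normalized directions `(x k − a)/‖x k − a‖`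
converge to some `w` with `v = ‖v‖ • w`. -/
def tanCone {E : Type*} [NormedAddCommGroup E] [NormedSpace ℝ E]
    (A : Set E) (a : E) : Set E :=
  {v | ∃ x : ℕ → E, (∀ k, x k ∈ A) ∧ (∀ k, x k ≠ a) ∧
    Tendsto x atTop (nhds a) ∧
    ∃ w : E, Tendsto (fun k => ‖x k - a‖⁻¹ • (x k - a)) atTop (nhds w) ∧
      v = ‖v‖ • w}

open Topology

def tanDirections {E : Type*} [NormedAddCommGroup E] [NormedSpace ℝ E]
    (A : Set E) (a : E) : Set E :=
  {w | ∃ x : ℕ → E, (∀ k, x k ∈ A) ∧ (∀ k, x k ≠ a) ∧ Tendsto x atTop (𝓝 a) ∧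
    Tendsto (fun k => ‖x k - a‖⁻¹ • (x k - a)) atTop (𝓝 w)}

section

variable {E F : Type*} [NormedAddCommGroup E] [NormedSpace ℝ E]
  [NormedAddCommGroup F] [NormedSpace ℝ F]

theorem norm_eq_one_of_mem_tanDirections {A : Set E} {a w : E}
    (hw : w ∈ tanDirections A a) : ‖w‖ = 1 := by
  obtain ⟨x, -, hxa, -, hdir⟩ := hw
  have hunit : ∀ k, ‖‖x k - a‖⁻¹ • (x k - a)‖ = 1 := fun k =>
    norm_smul_inv_norm (𝕜 := ℝ) (sub_ne_zero.mpr (hxa k))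
  exact tendsto_nhds_unique hdir.norm (by simpa only [hunit] using tendsto_const_nhds)

theorem tanCone_eq_nonneg_smul_tanDirections (A : Set E) (a : E) :
    tanCone A a = {v | ∃ t : ℝ, 0 ≤ t ∧ ∃ w ∈ tanDirections A a, v = t • w} := by
  ext v
  constructor
  · rintro ⟨x, hxA, hxa, hx, w, hdir, hv⟩
    exact ⟨‖v‖, norm_nonneg v, w, ⟨x, hxA, hxa, hx, hdir⟩, hv⟩
  · rintro ⟨t, ht, w, hw, rfl⟩
    have hw_norm := norm_eq_one_of_mem_tanDirections hw
    obtain ⟨x, hxA, hxa, hx, hdir⟩ := hw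
    refine ⟨x, hxA, hxa, hx, w, hdir, ?_⟩
    rw [norm_smul, hw_norm, mul_one, Real.norm_of_nonneg ht]

theorem ne_zero_of_mem_tanDirections {A : Set E} {a w : E} (hw : w ∈ tanDirections A a) :
    w ≠ 0 :=
  norm_ne_zero_iff.mp ((norm_eq_one_of_mem_tanDirections hw).symm ▸ one_ne_zero)

/-- Normalization is invariant under positive rescaling. -/
theorem tendsto_inv_norm_smul_of_tendsto_pos_smul {z : ℕ → F} {c : ℕ → ℝ} {L : F}
    (hc : ∀ k, 0 < c k) (hz : Tendsto (fun k => c k • z k) atTop (𝓝 L)) (hL : L ≠ 0) :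
    Tendsto (fun k => ‖z k‖⁻¹ • z k) atTop (𝓝 (‖L‖⁻¹ • L)) := by
  have hrescale : ∀ k, ‖c k • z k‖⁻¹ • (c k • z k) = ‖z k‖⁻¹ • z k := fun k => by
    rw [norm_smul, Real.norm_of_nonneg (hc k).le, smul_smul, mul_inv,
      mul_right_comm, inv_mul_cancel₀ (hc k).ne', one_mul]
  simpa only [hrescale] using (hz.norm.inv₀ (norm_ne_zero_iff.mpr hL)).smul hz

theorem HasFDerivAt.tendsto_inv_norm_smul_sub {f : E → F} {df : E →L[ℝ] F} {a w : E}
    (hf : HasFDerivAt f df a) {x : ℕ → E} (hx : Tendsto x atTop (𝓝 a))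
    (hdir : Tendsto (fun k => ‖x k - a‖⁻¹ • (x k - a)) atTop (𝓝 w)) :
    Tendsto (fun k => ‖x k - a‖⁻¹ • (f (x k) - f a)) atTop (𝓝 (df w)) := by
  have hremainder :=
    (hf.isLittleO.norm_right.comp_tendsto hx).tendsto_inv_smul_nhds_zero
  have hsplit : ∀ k, ‖x k - a‖⁻¹ • (f (x k) - f a) =
      df (‖x k - a‖⁻¹ • (x k - a)) + ‖x k - a‖⁻¹ • (f (x k) - f a - df (x k - a)) :=
    fun k => by rw [map_smul, ← smul_add, add_sub_cancel]
  simp only [hsplit]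
  simpa using ((df.continuous.tendsto w).comp hdir).add hremainder

theorem HasFDerivAt.tendsto_direction_comp {f : E → F} {df : E →L[ℝ] F} {a w : E}
    (hf : HasFDerivAt f df a) (hdfw : df w ≠ 0) {x : ℕ → E} (hxa : ∀ k, x k ≠ a)
    (hx : Tendsto x atTop (𝓝 a))
    (hdir : Tendsto (fun k => ‖x k - a‖⁻¹ • (x k - a)) atTop (𝓝 w)) :
    Tendsto (fun k => ‖f (x k) - f a‖⁻¹ • (f (x k) - f a)) atTop
      (𝓝 (‖df w‖⁻¹ • df w)) :=
  tendsto_inv_norm_smul_of_tendsto_pos_smul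
    (fun k => inv_pos.mpr (norm_pos_iff.mpr (sub_ne_zero.mpr (hxa k))))
    (hf.tendsto_inv_norm_smul_sub hx hdir) hdfw

theorem HasFDerivAt.inv_norm_smul_mem_tanDirections_image {f : E → F} {df : E →L[ℝ] F}
    {A : Set E} {a w : E} (hf : HasFDerivAt f df a) (ha : a ∈ A) (hf_inj : Set.InjOn f A)
    (hw : w ∈ tanDirections A a) (hdfw : df w ≠ 0) :
    ‖df w‖⁻¹ • df w ∈ tanDirections (f '' A) (f a) := by
  obtain ⟨x, hxA, hxa, hx, hdir⟩ := hw
  exact ⟨f ∘ x, fun k => Set.mem_image_of_mem f (hxA k),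
    fun k h => hxa k (hf_inj (hxA k) ha h), hf.continuousAt.tendsto.comp hx,
    hf.tendsto_direction_comp hdfw hxa hx hdir⟩

theorem exists_subseq_tendsto_direction [ProperSpace E] {x : ℕ → E} {a : E}
    (hxa : ∀ k, x k ≠ a) :
    ∃ w, ∃ φ : ℕ → ℕ, StrictMono φ ∧
      Tendsto (fun j => ‖x (φ j) - a‖⁻¹ • (x (φ j) - a)) atTop (𝓝 w) := by
  have hsphere : ∀ k, ‖x k - a‖⁻¹ • (x k - a) ∈ Metric.sphere (0 : E) 1 := fun k =>
    mem_sphere_zero_iff_norm.mpr (norm_smul_inv_norm (𝕜 := ℝ) (sub_ne_zero.mpr (hxa k)))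
  obtain ⟨w, -, φ, hφ, hlim⟩ := (isCompact_sphere (0 : E) 1).tendsto_subseq hsphere
  exact ⟨w, φ, hφ, hlim⟩

theorem HasFDerivAt.exists_mem_tanDirections_of_mem_image [ProperSpace E] {f : E → F}
    {df : E →L[ℝ] F} {A : Set E} {a : E} (hf : HasFDerivAt f df a) (ha : a ∈ A)
    (hdf_inj : Function.Injective df) (hf_inj : Set.InjOn f A)
    (hinv_cont : ContinuousWithinAt (Function.invFunOn f A) (f '' A) (f a))
    {u : F} (hu : u ∈ tanDirections (f '' A) (f a)) :
    ∃ w ∈ tanDirections A a, u = ‖df w‖⁻¹ • df w := by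
  obtain ⟨y, hyA, hya, hy, hdir⟩ := hu
  set x := fun k => Function.invFunOn f A (y k)
  have hxA : ∀ k, x k ∈ A := fun k => Function.invFunOn_mem (hyA k)
  have hfx : ∀ k, f (x k) = y k := fun k => Function.invFunOn_eq (hyA k)
  have hxa : ∀ k, x k ≠ a := fun k h => hya k (by rw [← hfx k, h])
  have hx : Tendsto x atTop (𝓝 a) := by
    have hlift := hinv_cont.tendsto.comp
      (tendsto_nhdsWithin_iff.mpr ⟨hy, Eventually.of_forall hyA⟩)
    rwa [hf_inj.leftInvOn_invFunOn ha] at hlift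
  obtain ⟨w, φ, hφ, hdir_w⟩ := exists_subseq_tendsto_direction hxa
  have hw : w ∈ tanDirections A a :=
    ⟨x ∘ φ, fun j => hxA (φ j), fun j => hxa (φ j), hx.comp hφ.tendsto_atTop, hdir_w⟩
  have hdfw : df w ≠ 0 := (hdf_inj.ne_iff' (map_zero df)).mpr (ne_zero_of_mem_tanDirections hw)
  have hdir_f := hf.tendsto_direction_comp hdfw (fun j => hxa (φ j))
    (hx.comp hφ.tendsto_atTop) hdir_w
  simp only [hfx] at hdir_f
  exact ⟨w, hw, tendsto_nhds_unique (hdir.comp hφ.tendsto_atTop) hdir_f⟩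

end

/-- Lemma A.2 of the paper.
Let `f : ℝ^m → ℝ^n`, `A ⊆ ℝ^m`, `a ∈ A`. If `f` is differentiable at `a` with injective
differential `df`, `f|_A` is injective, and the inverse of `f|_A` is continuous at
`f a`, then `df(Tan(A,a)) = Tan(f(A), f(a))`. -/
theorem tangent_cone_image
    (m n : ℕ)
    (f : EuclideanSpace ℝ (Fin m) → EuclideanSpace ℝ (Fin n))
    (A : Set (EuclideanSpace ℝ (Fin m))) (a : EuclideanSpace ℝ (Fin m)) (ha : a ∈ A)
    (df : EuclideanSpace ℝ (Fin m) →L[ℝ] EuclideanSpace ℝ (Fin n))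
    (hdiff : HasFDerivAt f df a)
    (hdf_inj : Function.Injective df)
    (hf_inj : Set.InjOn f A)
    (hinv_cont : ContinuousWithinAt (Function.invFunOn f A) (f '' A) (f a)) :
    df '' tanCone A a = tanCone (f '' A) (f a) := by
  have hdf_ne : ∀ w ∈ tanDirections A a, df w ≠ 0 := fun w hw =>
    (hdf_inj.ne_iff' (map_zero df)).mpr (ne_zero_of_mem_tanDirections hw)
  ext u
  simp only [tanCone_eq_nonneg_smul_tanDirections, Set.mem_image, Set.mem_ofPred_eq]
  constructor
  · rintro ⟨_, ⟨t, ht, w, hw, rfl⟩, rfl⟩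
    refine ⟨t * ‖df w‖, by positivity, _,
      hdiff.inv_norm_smul_mem_tanDirections_image ha hf_inj hw (hdf_ne w hw), ?_⟩
    rw [map_smul, smul_smul, mul_assoc, mul_inv_cancel₀ (norm_ne_zero_iff.mpr (hdf_ne w hw)),
      mul_one]
  · rintro ⟨t, ht, _, hu, rfl⟩
    obtain ⟨w, hw, rfl⟩ :=
      hdiff.exists_mem_tanDirections_of_mem_image ha hdf_inj hf_inj hinv_cont hu
    exact ⟨(t * ‖df w‖⁻¹) • w, ⟨_, by positivity, w, hw, rfl⟩, by rw [map_smul, smul_smul]⟩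
end

section
/- Let f : ℝ^d → ℝ be Lipschitz continuous with Lipschitz constant K. Then for every y₀ ∈ ℝ^d with ‖y₀‖ = 1 there exists A ∈ ℝ with |A| ≤ K such that the vector (A, y₀) ∈ ℝ × ℝ^d belongs to Tan(graph(f), (f(0), 0)). -/
open Filter

/-! Difference quotients of a `K`-Lipschitz function along `y` stay in `[-K‖y‖, K‖y‖]`, so
along `t = 1/(n+1)` a subsequence converges to some `A`; rescaling the secant vectors of the
graph by `t⁻¹` then gives `(A, y)` in the limit, and a nonzero limit of rescaled secants is a
tangent vector. -/

open Topology

theorem mem_tanCone_of_tendsto_inv_smul_sub {E : Type*} [NormedAddCommGroup E]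
    [NormedSpace ℝ E] {A : Set E} {a v : E} {x : ℕ → E} {t : ℕ → ℝ}
    (hxA : ∀ k, x k ∈ A) (hxa : ∀ k, x k ≠ a) (ht : Tendsto t atTop (𝓝 0))
    (ht_pos : ∀ k, 0 < t k) (hv : Tendsto (fun k => (t k)⁻¹ • (x k - a)) atTop (𝓝 v))
    (hv₀ : v ≠ 0) : v ∈ tanCone A a := by
  set u : ℕ → E := fun k => (t k)⁻¹ • (x k - a)
  have hx_eq : ∀ k, x k - a = t k • u k := fun k =>
    (smul_inv_smul₀ (ht_pos k).ne' _).symm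
  have hdir : ∀ k, ‖x k - a‖⁻¹ • (x k - a) = ‖u k‖⁻¹ • u k := fun k => by
    rw [hx_eq, norm_smul, Real.norm_of_nonneg (ht_pos k).le, mul_inv, smul_smul,
      mul_right_comm, inv_mul_cancel₀ (ht_pos k).ne', one_mul]
  refine ⟨x, hxA, hxa, ?_, ‖v‖⁻¹ • v, ?_, (smul_inv_smul₀ (norm_ne_zero_iff.2 hv₀) v).symm⟩
  · have hsub : Tendsto (fun k => x k - a) atTop (𝓝 0) := by
      simpa only [hx_eq, zero_smul] using ht.smul hv
    simpa using hsub.add_const a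
  · simpa only [hdir] using (hv.norm.inv₀ (norm_ne_zero_iff.2 hv₀)).smul hv

theorem LipschitzWith.abs_inv_mul_sub_le {E : Type*} [SeminormedAddCommGroup E]
    [NormedSpace ℝ E] {f : E → ℝ} {K : NNReal} (hf : LipschitzWith K f) (x₀ y : E)
    {t : ℝ} (ht : t ≠ 0) : |t⁻¹ * (f (x₀ + t • y) - f x₀)| ≤ K * ‖y‖ := by
  have h := hf.dist_le_mul (x₀ + t • y) x₀
  rw [Real.dist_eq, dist_eq_norm, add_sub_cancel_left, norm_smul, Real.norm_eq_abs] at h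
  rw [abs_mul, abs_inv, inv_mul_le_iff₀ (abs_pos.2 ht)]
  linarith

theorem LipschitzWith.exists_tendsto_subseq_inv_mul_sub {E : Type*} [SeminormedAddCommGroup E]
    [NormedSpace ℝ E] {f : E → ℝ} {K : NNReal} (hf : LipschitzWith K f) (x₀ y : E)
    {t : ℕ → ℝ} (ht : ∀ n, t n ≠ 0) :
    ∃ A, |A| ≤ K * ‖y‖ ∧ ∃ φ : ℕ → ℕ, StrictMono φ ∧
      Tendsto (fun n => (t (φ n))⁻¹ * (f (x₀ + t (φ n) • y) - f x₀)) atTop (𝓝 A) := by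
  have hbound : ∀ n, (t n)⁻¹ * (f (x₀ + t n • y) - f x₀) ∈ Metric.closedBall 0 (K * ‖y‖) :=
    fun n => by
      rw [mem_closedBall_zero_iff, Real.norm_eq_abs]
      exact hf.abs_inv_mul_sub_le x₀ y (ht n)
  obtain ⟨A, hA, φ, hφ, hlim⟩ := (isCompact_closedBall (0 : ℝ) _).tendsto_subseq hbound
  rw [mem_closedBall_zero_iff, Real.norm_eq_abs] at hA
  exact ⟨A, hA, φ, hφ, hlim⟩

theorem LipschitzWith.exists_mem_tanCone_graph {E : Type*} [NormedAddCommGroup E]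
    [NormedSpace ℝ E] {f : E → ℝ} {K : NNReal} (hf : LipschitzWith K f) (x₀ : E) {y : E}
    (hy : y ≠ 0) :
    ∃ A, |A| ≤ K * ‖y‖ ∧ (A, y) ∈ tanCone {p : ℝ × E | p.1 = f p.2} (f x₀, x₀) := by
  set t : ℕ → ℝ := fun n => 1 / (n + 1)
  have ht_pos : ∀ n, 0 < t n := fun n => by positivity
  obtain ⟨A, hA, φ, hφ, hlim⟩ := hf.exists_tendsto_subseq_inv_mul_sub x₀ y fun n => (ht_pos n).ne'
  refine ⟨A, hA, mem_tanCone_of_tendsto_inv_smul_sub (t := t ∘ φ)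
    (x := fun n => (f (x₀ + t (φ n) • y), x₀ + t (φ n) • y)) (fun _ => rfl) ?_
    (tendsto_one_div_add_atTop_nhds_zero_nat.comp hφ.tendsto_atTop) (fun n => ht_pos _) ?_
    (by simp [hy])⟩
  · intro n h
    have := congrArg Prod.snd h
    simp_all [(ht_pos (φ n)).ne']
  · have hsecant : ∀ n, (t (φ n))⁻¹ • ((f (x₀ + t (φ n) • y), x₀ + t (φ n) • y) - (f x₀, x₀))
        = ((t (φ n))⁻¹ * (f (x₀ + t (φ n) • y) - f x₀), y) := fun n => by
      rw [Prod.mk_sub_mk, Prod.smul_mk, add_sub_cancel_left, inv_smul_smul₀ (ht_pos _).ne',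
        smul_eq_mul]
    simpa only [Function.comp_apply, hsecant] using hlim.prodMk_nhds tendsto_const_nhds

/-- Let `f : ℝ^d → ℝ` be Lipschitz with constant `K`. Then for every unit vector
`y₀ ∈ ℝ^d` there is `A ∈ ℝ` with `|A| ≤ K` such that `(A, y₀)` belongs to the tangent
cone of `graph f` (function value in the first coordinate) at `(f 0, 0)`. -/
theorem graph_tangent_vector_in_direction
    (d : ℕ) (f : EuclideanSpace ℝ (Fin d) → ℝ) (K : NNReal)
    (hf : LipschitzWith K f) :
    ∀ y₀ : EuclideanSpace ℝ (Fin d), ‖y₀‖ = 1 →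
      ∃ A : ℝ, |A| ≤ (K : ℝ) ∧
        ((A, y₀) : ℝ × EuclideanSpace ℝ (Fin d)) ∈
          tanCone {p : ℝ × EuclideanSpace ℝ (Fin d) | p.1 = f p.2} (f 0, 0) := by
  intro y₀ hy₀
  have hy₀_ne : y₀ ≠ 0 := by
    rintro rfl
    simp at hy₀
  simpa only [hy₀, mul_one] using hf.exists_mem_tanCone_graph 0 hy₀_ne
end

section
/- Let d ≥ 1, let U, V ⊆ ℝ^{d+1} be open sets, and let ψ : U → V be a smooth diffeomorphism. Let f₁, f₂ : ℝ^d → ℝ be Lipschitz continuous functions such that (f₁(0), 0) ∈ U, ψ(f₁(0), 0) = (f₂(0), 0), and ψ(graph(f₁) ∩ U) = graph(f₂) ∩ V. If f₁ is differentiable at 0, then f₂ is differentiable at 0. -/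
open Asymptotics Filter Topology

/-- If `t * c = o(t)` near `0`, then `c = 0`. -/
lemma aux_mul_isLittleO {c : ℝ}
    (h : (fun t : ℝ => t * c) =o[𝓝 (0 : ℝ)] (fun t : ℝ => t)) : c = 0 := by
  by_contra hc
  have hc2 : (0 : ℝ) < |c| / 2 := by positivity
  have h1 := (isLittleO_iff.mp h hc2).filter_mono (nhdsWithin_le_nhds (s := {(0:ℝ)}ᶜ))
  have h2 : ∀ᶠ t in 𝓝[≠] (0:ℝ), t ≠ 0 := self_mem_nhdsWithin
  obtain ⟨t, ht, ht0⟩ := (h1.and h2).exists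
  rw [Real.norm_eq_abs, Real.norm_eq_abs, abs_mul] at ht
  have htpos : 0 < |t| := abs_pos.mpr ht0
  nlinarith [abs_pos.mpr hc]

/-- Lemma A.4 of the paper.
Let `d ≥ 1`, let `U, V ⊆ ℝ^{d+1} = ℝ × ℝ^d` be open, and let `ψ : U → V` be a smooth
diffeomorphism (with smooth inverse `φ`). Let `f₁, f₂ : ℝ^d → ℝ` be Lipschitz with
`(f₁ 0, 0) ∈ U`, `ψ (f₁ 0, 0) = (f₂ 0, 0)` and `ψ(graph f₁ ∩ U) = graph f₂ ∩ V`
(function value in the first coordinate). If `f₁` is differentiable at `0`, then so is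
`f₂`. -/
theorem graph_differentiability_chart_independent
    (d : ℕ) (hd : 1 ≤ d)
    (U V : Set (ℝ × EuclideanSpace ℝ (Fin d))) (hU : IsOpen U) (hV : IsOpen V)
    (ψ φ : ℝ × EuclideanSpace ℝ (Fin d) → ℝ × EuclideanSpace ℝ (Fin d))
    (hψ_smooth : ContDiffOn ℝ (⊤ : ℕ∞) ψ U) (hφ_smooth : ContDiffOn ℝ (⊤ : ℕ∞) φ V)
    (hψ_maps : Set.MapsTo ψ U V) (hφ_maps : Set.MapsTo φ V U)
    (h_left : ∀ x ∈ U, φ (ψ x) = x) (h_right : ∀ y ∈ V, ψ (φ y) = y)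
    (f₁ f₂ : EuclideanSpace ℝ (Fin d) → ℝ) (K₁ K₂ : NNReal)
    (hf₁ : LipschitzWith K₁ f₁) (hf₂ : LipschitzWith K₂ f₂)
    (h_base : ((f₁ 0, 0) : ℝ × EuclideanSpace ℝ (Fin d)) ∈ U)
    (h_pt : ψ (f₁ 0, 0) = (f₂ 0, 0))
    (h_graph : ψ '' ({p : ℝ × EuclideanSpace ℝ (Fin d) | p.1 = f₁ p.2} ∩ U) =
      {p : ℝ × EuclideanSpace ℝ (Fin d) | p.1 = f₂ p.2} ∩ V)
    (h_diff : DifferentiableAt ℝ f₁ 0) :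
    DifferentiableAt ℝ f₂ 0 := by
  set p0 : ℝ × (EuclideanSpace ℝ (Fin d)) := (f₁ 0, 0) with hp0def
  have h_base' : ψ p0 ∈ V := hψ_maps h_base
  -- ψ and φ are differentiable at the relevant points
  have hψd : HasFDerivAt ψ (fderiv ℝ ψ p0) p0 :=
    ((hψ_smooth.contDiffAt (hU.mem_nhds h_base)).differentiableAt (by simp)).hasFDerivAt
  have hφd : HasFDerivAt φ (fderiv ℝ φ (ψ p0)) (ψ p0) :=
    ((hφ_smooth.contDiffAt (hV.mem_nhds h_base')).differentiableAt (by simp)).hasFDerivAt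
  set Dψ := fderiv ℝ ψ p0
  set Dφ := fderiv ℝ φ (ψ p0)
  -- the graph maps
  set G : (EuclideanSpace ℝ (Fin d)) → ℝ × (EuclideanSpace ℝ (Fin d)) := fun x => ψ (f₁ x, x) with hGdef
  set g₁ : (EuclideanSpace ℝ (Fin d)) → ℝ := fun x => (G x).1 with hg₁def
  set g₂ : (EuclideanSpace ℝ (Fin d)) → (EuclideanSpace ℝ (Fin d)) := fun x => (G x).2 with hg₂def
  have hG0 : G 0 = (f₂ 0, 0) := h_pt
  have hg₂0 : g₂ 0 = 0 := by simp [hg₂def, hG0]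
  have hg₁0 : g₁ 0 = f₂ 0 := by simp [hg₁def, hG0]
  -- derivative of G
  have hB : HasFDerivAt (fun x : (EuclideanSpace ℝ (Fin d)) => ((f₁ x, x) : ℝ × (EuclideanSpace ℝ (Fin d))))
      ((fderiv ℝ f₁ 0).prod (ContinuousLinearMap.id ℝ (EuclideanSpace ℝ (Fin d)))) 0 :=
    h_diff.hasFDerivAt.prodMk (hasFDerivAt_id 0)
  set B : (EuclideanSpace ℝ (Fin d)) →L[ℝ] ℝ × (EuclideanSpace ℝ (Fin d)) := (fderiv ℝ f₁ 0).prod (ContinuousLinearMap.id ℝ (EuclideanSpace ℝ (Fin d))) with hBdef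
  have hG : HasFDerivAt G (Dψ.comp B) 0 := by
    have h1 : HasFDerivAt ψ Dψ
        ((fun x : EuclideanSpace ℝ (Fin d) => ((f₁ x, x) : ℝ × EuclideanSpace ℝ (Fin d))) 0) :=
      hψd
    have := HasFDerivAt.comp
      (f := fun x : EuclideanSpace ℝ (Fin d) => ((f₁ x, x) : ℝ × EuclideanSpace ℝ (Fin d)))
      (g := ψ) (0 : EuclideanSpace ℝ (Fin d)) h1 hB
    rw [hGdef]
    exact this
  set DG : (EuclideanSpace ℝ (Fin d)) →L[ℝ] ℝ × (EuclideanSpace ℝ (Fin d)) := Dψ.comp B with hDGdef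
  set A : (EuclideanSpace ℝ (Fin d)) →L[ℝ] (EuclideanSpace ℝ (Fin d)) := (ContinuousLinearMap.snd ℝ ℝ (EuclideanSpace ℝ (Fin d))).comp DG with hAdef
  have hg₂d : HasFDerivAt g₂ A 0 :=
    (ContinuousLinearMap.snd ℝ ℝ (EuclideanSpace ℝ (Fin d))).hasFDerivAt.comp 0 hG
  have hg₁d : HasFDerivAt g₁ ((ContinuousLinearMap.fst ℝ ℝ (EuclideanSpace ℝ (Fin d))).comp DG) 0 :=
    (ContinuousLinearMap.fst ℝ ℝ (EuclideanSpace ℝ (Fin d))).hasFDerivAt.comp 0 hG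
  -- eventually near 0, the point (f₁ x, x) lies in U, and its image lies on graph f₂
  have hcont₁ : Continuous fun x : (EuclideanSpace ℝ (Fin d)) => ((f₁ x, x) : ℝ × (EuclideanSpace ℝ (Fin d))) :=
    hf₁.continuous.prodMk continuous_id
  have ev1 : ∀ᶠ x in 𝓝 (0 : (EuclideanSpace ℝ (Fin d))), ((f₁ x, x) : ℝ × (EuclideanSpace ℝ (Fin d))) ∈ U :=
    hcont₁.continuousAt.preimage_mem_nhds (hU.mem_nhds h_base)
  have himg : ∀ x : (EuclideanSpace ℝ (Fin d)), ((f₁ x, x) : ℝ × (EuclideanSpace ℝ (Fin d))) ∈ U → g₁ x = f₂ (g₂ x) ∧ G x ∈ V := by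
    intro x hx
    have hmem : ((f₁ x, x) : ℝ × (EuclideanSpace ℝ (Fin d))) ∈ {p : ℝ × (EuclideanSpace ℝ (Fin d)) | p.1 = f₁ p.2} ∩ U := ⟨rfl, hx⟩
    have : G x ∈ {p : ℝ × (EuclideanSpace ℝ (Fin d)) | p.1 = f₂ p.2} ∩ V := by
      rw [← h_graph]; exact Set.mem_image_of_mem ψ hmem
    exact ⟨this.1, this.2⟩
  -- injectivity of DG
  have hDφψ : Dφ.comp Dψ = ContinuousLinearMap.id ℝ (ℝ × (EuclideanSpace ℝ (Fin d))) := by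
    have hcomp : HasFDerivAt (fun x => φ (ψ x)) (Dφ.comp Dψ) p0 := hφd.comp p0 hψd
    have heq : (fun x => φ (ψ x)) =ᶠ[𝓝 p0] id :=
      eventually_of_mem (hU.mem_nhds h_base) h_left
    have hid : HasFDerivAt (fun x => φ (ψ x)) (ContinuousLinearMap.id ℝ (ℝ × (EuclideanSpace ℝ (Fin d)))) p0 :=
      (hasFDerivAt_id p0).congr_of_eventuallyEq heq
    exact hcomp.unique hid
  have hDψ_inj : Function.Injective Dψ := by
    intro a b hab
    have h1 : Dφ (Dψ a) = Dφ (Dψ b) := by rw [hab]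
    have h2 : ∀ z, Dφ (Dψ z) = z := fun z =>
      congrArg (fun (L : (ℝ × (EuclideanSpace ℝ (Fin d))) →L[ℝ] (ℝ × (EuclideanSpace ℝ (Fin d)))) => L z) hDφψ
    rw [h2 a, h2 b] at h1; exact h1
  have hDG_inj : ∀ v : (EuclideanSpace ℝ (Fin d)), DG v = 0 → v = 0 := by
    intro v hv
    have : Dψ (B v) = Dψ 0 := by
      simpa [hDGdef, ContinuousLinearMap.comp_apply, map_zero] using hv
    have hBv : B v = 0 := hDψ_inj this
    have : (B v).2 = v := rfl
    rw [hBv] at this; exact this.symm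
  -- A injective via the Lipschitz directional argument
  have hA_ker : ∀ v : (EuclideanSpace ℝ (Fin d)), A v = 0 → v = 0 := by
    intro v hv
    -- curve t ↦ t • v
    have hcur : HasDerivAt (fun t : ℝ => t • v) v 0 := by
      simpa using (hasDerivAt_id (0 : ℝ)).smul_const v
    have hcur0 : (0 : ℝ) • v = 0 := zero_smul _ _
    have hGc : HasDerivAt (fun t : ℝ => G (t • v)) (DG v) 0 := by
      have := hG.comp_hasDerivAt_of_eq 0 hcur (by simp)
      simpa [Function.comp_def] using this
    set c : ℝ := (DG v).1 with hcdef
    have huc : HasDerivAt (fun t : ℝ => g₁ (t • v)) c 0 := by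
      have := (ContinuousLinearMap.fst ℝ ℝ
        (EuclideanSpace ℝ (Fin d))).hasFDerivAt.comp_hasDerivAt_of_eq 0 hGc rfl
      simpa [hg₁def, Function.comp_def] using this
    have hwc : HasDerivAt (fun t : ℝ => g₂ (t • v)) 0 0 := by
      have := (ContinuousLinearMap.snd ℝ ℝ
        (EuclideanSpace ℝ (Fin d))).hasFDerivAt.comp_hasDerivAt_of_eq 0 hGc rfl
      have hAv : (DG v).2 = A v := rfl
      simpa [hg₂def, hAv, hv, Function.comp_def] using this
    -- w = o(t)
    have hw_littleo : (fun t : ℝ => g₂ (t • v)) =o[𝓝 (0:ℝ)] (fun t : ℝ => t) := by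
      have := hwc.isLittleO
      simpa [hg₂0, hcur0] using this
    -- |u t - u 0| ≤ K₂ ‖w t‖ eventually
    have hev : ∀ᶠ t : ℝ in 𝓝 0, ‖g₁ (t • v) - g₁ 0‖ ≤ (K₂ : ℝ) * ‖g₂ (t • v)‖ := by
      have htend : Filter.Tendsto (fun t : ℝ => t • v) (𝓝 0) (𝓝 (0 : (EuclideanSpace ℝ (Fin d)))) := by
        exact (continuous_id.smul continuous_const).tendsto' 0 0 (by simp)
      filter_upwards [htend.eventually ev1] with t ht
      have h1 : g₁ (t • v) = f₂ (g₂ (t • v)) := (himg _ ht).1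
      have h2 : dist (f₂ (g₂ (t • v))) (f₂ 0) ≤ (K₂ : ℝ) * dist (g₂ (t • v)) (0 : (EuclideanSpace ℝ (Fin d))) :=
        hf₂.dist_le_mul _ _
      rw [h1, hg₁0]
      rw [Real.dist_eq] at h2
      rw [Real.norm_eq_abs]
      calc |f₂ (g₂ (t • v)) - f₂ 0| ≤ (K₂ : ℝ) * dist (g₂ (t • v)) (0 : (EuclideanSpace ℝ (Fin d))) := h2
        _ = (K₂ : ℝ) * ‖g₂ (t • v)‖ := by rw [dist_zero_right]
    have hu_bigO : (fun t : ℝ => g₁ (t • v) - g₁ 0) =O[𝓝 (0:ℝ)]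
        (fun t : ℝ => g₂ (t • v)) :=
      IsBigO.of_bound _ hev
    have hu_littleo : (fun t : ℝ => g₁ (t • v) - g₁ 0) =o[𝓝 (0:ℝ)] (fun t : ℝ => t) :=
      hu_bigO.trans_isLittleO hw_littleo
    have hud : (fun t : ℝ => g₁ (t • v) - g₁ 0 - t * c) =o[𝓝 (0:ℝ)] (fun t : ℝ => t) := by
      have := huc.isLittleO
      simpa [hcur0, smul_eq_mul] using this
    have hc0 : c = 0 := by
      apply aux_mul_isLittleO
      have : (fun t : ℝ => t * c) =
          fun t : ℝ => (g₁ (t • v) - g₁ 0) - (g₁ (t • v) - g₁ 0 - t * c) := by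
        funext t; ring
      rw [this]
      exact hu_littleo.sub hud
    have hDGv : DG v = 0 := by
      have h2' : (DG v).2 = A v := rfl
      have : DG v = ((DG v).1, (DG v).2) := rfl
      rw [this, ← hcdef, hc0, h2', hv]; rfl
    exact hDG_inj v hDGv
  have hA_inj : Function.Injective A := by
    intro x y hxy
    have : A (x - y) = 0 := by rw [map_sub, hxy, sub_self]
    have := hA_ker _ this
    exact sub_eq_zero.mp this
  have hA_surj : Function.Surjective A :=
    LinearMap.injective_iff_surjective.mp hA_inj
  set A' : (EuclideanSpace ℝ (Fin d)) ≃L[ℝ] (EuclideanSpace ℝ (Fin d)) :=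
    (LinearEquiv.ofBijective (A : (EuclideanSpace ℝ (Fin d)) →ₗ[ℝ] (EuclideanSpace ℝ (Fin d))) ⟨hA_inj, hA_surj⟩).toContinuousLinearEquiv
    with hA'def
  have hA'eq : (A' : (EuclideanSpace ℝ (Fin d)) →L[ℝ] (EuclideanSpace ℝ (Fin d))) = A := by ext x; rfl
  -- the local inverse h
  set h : (EuclideanSpace ℝ (Fin d)) → (EuclideanSpace ℝ (Fin d)) := fun y => (φ (f₂ y, y)).2 with hhdef
  have hq0 : φ (f₂ 0, 0) = p0 := by rw [← h_pt]; exact h_left _ h_base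
  have hh0 : h 0 = 0 := by simp [hhdef, hq0, hp0def]
  have ev2 : ∀ᶠ y in 𝓝 (0 : (EuclideanSpace ℝ (Fin d))), ((f₂ y, y) : ℝ × (EuclideanSpace ℝ (Fin d))) ∈ V := by
    have hcont₂ : Continuous fun y : (EuclideanSpace ℝ (Fin d)) => ((f₂ y, y) : ℝ × (EuclideanSpace ℝ (Fin d))) :=
      hf₂.continuous.prodMk continuous_id
    have : ((f₂ 0, 0) : ℝ × (EuclideanSpace ℝ (Fin d))) ∈ V := by rw [← h_pt]; exact h_base'
    exact hcont₂.continuousAt.preimage_mem_nhds (hV.mem_nhds this)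
  have hkey : ∀ y : (EuclideanSpace ℝ (Fin d)), ((f₂ y, y) : ℝ × (EuclideanSpace ℝ (Fin d))) ∈ V → G (h y) = (f₂ y, y) := by
    intro y hy
    have hmem : ((f₂ y, y) : ℝ × (EuclideanSpace ℝ (Fin d))) ∈ {p : ℝ × (EuclideanSpace ℝ (Fin d)) | p.1 = f₂ p.2} ∩ V := ⟨rfl, hy⟩
    rw [← h_graph] at hmem
    obtain ⟨p, ⟨hp1, hpU⟩, hp2⟩ := hmem
    have hφp : φ (f₂ y, y) = p := by rw [← hp2]; exact h_left _ hpU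
    have hhy : h y = p.2 := by rw [hhdef]; simp [hφp]
    have hp' : p = (f₁ p.2, p.2) := by
      have : p.1 = f₁ p.2 := hp1
      exact Prod.ext this rfl
    rw [hGdef]
    show ψ (f₁ (h y), h y) = (f₂ y, y)
    rw [hhy, ← hp', hp2]
  have hfg : ∀ᶠ y in 𝓝 (0 : (EuclideanSpace ℝ (Fin d))), g₂ (h y) = y := by
    filter_upwards [ev2] with y hy
    have := hkey y hy
    rw [hg₂def]; simp [this]
  have hf₂eq : ∀ᶠ y in 𝓝 (0 : (EuclideanSpace ℝ (Fin d))), f₂ y = g₁ (h y) := by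
    filter_upwards [ev2] with y hy
    have := hkey y hy
    rw [hg₁def]; simp [this]
  -- h is continuous at 0
  have hφcont : ContinuousAt φ (f₂ 0, 0) := by
    rw [← h_pt]
    exact (hφ_smooth.continuousOn.continuousAt (hV.mem_nhds h_base'))
  have hhcont : ContinuousAt h 0 := by
    have h1 : ContinuousAt (fun y : (EuclideanSpace ℝ (Fin d)) => ((f₂ y, y) : ℝ × (EuclideanSpace ℝ (Fin d)))) 0 :=
      (hf₂.continuous.prodMk continuous_id).continuousAt
    have h2 : ContinuousAt (fun y : EuclideanSpace ℝ (Fin d) => φ (f₂ y, y)) 0 :=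
      ContinuousAt.comp
        (f := fun y : EuclideanSpace ℝ (Fin d) => ((f₂ y, y) : ℝ × EuclideanSpace ℝ (Fin d)))
        hφcont h1
    exact (continuous_snd.continuousAt).comp h2
  -- h is differentiable at 0 via the local left inverse lemma
  have hg₂A' : HasFDerivAt g₂ (A' : (EuclideanSpace ℝ (Fin d)) →L[ℝ] (EuclideanSpace ℝ (Fin d))) (h 0) := by
    rw [hh0, hA'eq]; exact hg₂d
  have hhd : HasFDerivAt h (A'.symm : (EuclideanSpace ℝ (Fin d)) →L[ℝ] (EuclideanSpace ℝ (Fin d))) 0 :=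
    HasFDerivAt.of_local_left_inverse hhcont hg₂A' hfg
  -- conclude
  have hcomp : DifferentiableAt ℝ (fun y => g₁ (h y)) 0 := by
    have hg₁0' : DifferentiableAt ℝ g₁ (h 0) := by
      rw [hh0]; exact hg₁d.differentiableAt
    exact hg₁0'.comp 0 hhd.differentiableAt
  exact hcomp.congr_of_eventuallyEq hf₂eq
end
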